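/- Let the DPC-N iterates be defined as follows: given y_0 ∈ E and sequences of symmetric positive semidefinite linear maps H_k and Ĥ_k on E satisfying ‖id − (∇²_y F(t_k, y_k)) ∘ H_k‖ ≤ ε and ‖id − (∇²_y F(t_{k+1}, y_{k+1|k})) ∘ Ĥ_k‖ ≤ ε' for all k, set y_{k+1|k} := y_k − h · H_k (∂_t ∇_y F(t_k, y_k)) (prediction) and y_{k+1} := y_{k+1|k} − γ · Ĥ_k (∇_y F(t_{k+1}, y_{k+1|k})) (approximate damped Newton correction) with step-size γ ∈ (0,1]. Define φ := hC0ε/m + h²Δ, α₂ := γC1σ²/(2m), α₁ := σ·(γC1φ/m + γL'ε'/m + 1 − γ), α₀ := φ·(γC1φ/(2m) + γL'ε'/m + 1 − γ). Suppose α₂ > 0 and there exists τ ∈ (0,1) such that α₁ < τ, ‖y_0 − y*(t_0)‖ ≤ (τ − α₁)/α₂, and τ(τ − α₁)/α₂ + α₀ ≤ (τ − α₁)/α₂. Then for every k ≥ 0: ‖y_k − y*(t_k)‖ ≤ τ^k ‖y_0 − y*(t_0)‖ + α₀ (1 − τ^k)/(1 − τ); in particular limsup_{k→∞} ‖y_k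 − y*(t_k)‖ ≤ α₀/(1 − τ). -/

import Mathlib

/-!
Each DPC-N step is compared with an exact Newton step along the optimal trajectory. Strong
convexity makes every Hessian invertible with inverse of norm at most `1/m`, and a second-order
Taylor expansion of `∇F` in space and time shows that the trajectory moves as
`y*(t + h) - y*(t) = -h ∇²F⁻¹ ∂ₜ∇F + O(h² Δ)`. Hence the prediction error is at most
`σ eₖ + φ`, and the damped, approximately inverted Newton correction maps a prediction error `p`
to at most `(1 - γ) p + γ (C₁ p² / (2m) + ε' L' p / m)`. Together,
`eₖ₊₁ ≤ α₂ eₖ² + α₁ eₖ + α₀`; the attraction-region condition keeps `eₖ ≤ (τ - α₁) / α₂`,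
where this quadratic recursion is dominated by the affine one `eₖ₊₁ ≤ τ eₖ + α₀`.
-/

open scoped InnerProductSpace

local notation "E" n => EuclideanSpace ℝ (Fin n)

section Operators

variable {V : Type*} [NormedAddCommGroup V] [InnerProductSpace ℝ V]

lemma mul_norm_le_norm_of_mul_sq_le_inner {m : ℝ} {v w : V} (h : m * ‖v‖ ^ 2 ≤ ⟪w, v⟫_ℝ) :
    m * ‖v‖ ≤ ‖w‖ := by
  rcases (norm_nonneg v).eq_or_lt with hv | hv
  · rw [← hv, mul_zero]
    exact norm_nonneg w
  · refine le_of_mul_le_mul_right ?_ hv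
    calc m * ‖v‖ * ‖v‖ = m * ‖v‖ ^ 2 := by ring
      _ ≤ ⟪w, v⟫_ℝ := h
      _ ≤ ‖w‖ * ‖v‖ := real_inner_le_norm w v

lemma ContinuousLinearMap.norm_le_of_isSymmetric {T : V →L[ℝ] V} {L : ℝ}
    (hT : (T : V →ₗ[ℝ] V).IsSymmetric) (hL : 0 ≤ L) (hle : ∀ v, |⟪T v, v⟫_ℝ| ≤ L * ‖v‖ ^ 2) :
    ‖T‖ ≤ L := by
  rw [T.norm_eq_iSup_rayleighQuotient hT]
  refine ciSup_le fun v => ?_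
  rcases (norm_nonneg v).eq_or_lt with hv | hv
  · simp [norm_eq_zero.1 hv.symm, hL]
  · rw [rayleighQuotient, reApplyInnerSelf_apply, RCLike.re_to_real, abs_div, abs_sq,
      div_le_iff₀ (by positivity)]
    exact hle v

variable {m : ℝ} {A : V →L[ℝ] V}

lemma ContinuousLinearMap.apply_ringInverse_apply (hA : IsUnit A) (w : V) :
    A (Ring.inverse A w) = w :=
  congrArg (fun T : V →L[ℝ] V => T w) (Ring.mul_inverse_cancel A hA)

lemma ContinuousLinearMap.ringInverse_apply_apply (hA : IsUnit A) (v : V) :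
    Ring.inverse A (A v) = v :=
  congrArg (fun T : V →L[ℝ] V => T v) (Ring.inverse_mul_cancel A hA)

variable [FiniteDimensional ℝ V]

lemma isUnit_of_coercive (hm : 0 < m)
    (hA : ∀ v, m * ‖v‖ ^ 2 ≤ ⟪A v, v⟫_ℝ) : IsUnit A := by
  have hinj : Function.Injective A := by
    refine (injective_iff_map_eq_zero A).2 fun v hv => norm_eq_zero.1 ?_
    have := mul_norm_le_norm_of_mul_sq_le_inner (hA v)
    rw [hv, norm_zero] at this
    exact le_antisymm (nonpos_of_mul_nonpos_right this hm) (norm_nonneg v)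
  exact ContinuousLinearMap.isUnit_iff_bijective.2
    ⟨hinj, (LinearMap.injective_iff_surjective (f := (A : V →ₗ[ℝ] V))).1 hinj⟩

lemma norm_ringInverse_apply_le (hm : 0 < m)
    (hA : ∀ v, m * ‖v‖ ^ 2 ≤ ⟪A v, v⟫_ℝ) (w : V) : ‖Ring.inverse A w‖ ≤ ‖w‖ / m := by
  rw [le_div_iff₀' hm]
  have := mul_norm_le_norm_of_mul_sq_le_inner (hA (Ring.inverse A w))
  rwa [A.apply_ringInverse_apply (isUnit_of_coercive hm hA)] at this

lemma norm_apply_sub_ringInverse_apply_le (hm : 0 < m)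
    (hA : ∀ v, m * ‖v‖ ^ 2 ≤ ⟪A v, v⟫_ℝ) (H : V →L[ℝ] V) (w : V) :
    ‖H w - Ring.inverse A w‖ ≤ ‖ContinuousLinearMap.id ℝ V - A.comp H‖ * ‖w‖ / m := by
  have hU := isUnit_of_coercive hm hA
  have hid : H w - Ring.inverse A w
      = -Ring.inverse A ((ContinuousLinearMap.id ℝ V - A.comp H) w) := by
    simp [A.ringInverse_apply_apply hU]
  rw [hid, norm_neg]
  exact (norm_ringInverse_apply_le hm hA _).trans
    (div_le_div_of_nonneg_right (ContinuousLinearMap.le_opNorm _ _) hm.le)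

lemma norm_ringInverse_apply_sub_le {A' : V →L[ℝ] V} (hm : 0 < m)
    (hA : ∀ v, m * ‖v‖ ^ 2 ≤ ⟪A v, v⟫_ℝ) (hA' : ∀ v, m * ‖v‖ ^ 2 ≤ ⟪A' v, v⟫_ℝ) (w : V) :
    ‖Ring.inverse A w - Ring.inverse A' w‖ ≤ ‖A - A'‖ * ‖w‖ / m ^ 2 := by
  have hid : Ring.inverse A w - Ring.inverse A' w
      = Ring.inverse A ((A' - A) (Ring.inverse A' w)) := by
    conv_lhs => rw [← A'.apply_ringInverse_apply (isUnit_of_coercive hm hA') w]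
    rw [sub_apply, map_sub, A.ringInverse_apply_apply (isUnit_of_coercive hm hA),
      A'.ringInverse_apply_apply (isUnit_of_coercive hm hA')]
  calc ‖Ring.inverse A w - Ring.inverse A' w‖
      ≤ ‖(A' - A) (Ring.inverse A' w)‖ / m := hid ▸ norm_ringInverse_apply_le hm hA _
    _ ≤ ‖A' - A‖ * (‖w‖ / m) / m := by
        gcongr
        exact ((A' - A).le_opNorm _).trans (by gcongr; exact norm_ringInverse_apply_le hm hA' w)
    _ = ‖A - A'‖ * ‖w‖ / m ^ 2 := by rw [norm_sub_rev]; ring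

end Operators

section Calculus

variable {V W : Type*} [NormedAddCommGroup V] [NormedSpace ℝ V]
  [NormedAddCommGroup W] [NormedSpace ℝ W]

lemma norm_sub_le_mul_abs_of_hasDerivAt {f f' : ℝ → W} {C : ℝ}
    (hf : ∀ u, HasDerivAt f (f' u) u) (hf' : ∀ u, ‖f' u‖ ≤ C) (a b : ℝ) :
    ‖f b - f a‖ ≤ C * |b - a| :=
  convex_univ.norm_image_sub_le_of_norm_hasDerivWithin_le (fun u _ => (hf u).hasDerivWithinAt)
    (fun u _ => hf' u) (Set.mem_univ a) (Set.mem_univ b)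

lemma norm_sub_sub_smul_le_of_norm_deriv_sub_le {f f' : ℝ → W} {K a b : ℝ}
    (hf : ∀ u ∈ Set.Icc a b, HasDerivAt f (f' u) u)
    (hf' : ∀ u ∈ Set.Icc a b, ‖f' u - f' a‖ ≤ K * (u - a)) (hab : a ≤ b) :
    ‖f b - f a - (b - a) • f' a‖ ≤ K / 2 * (b - a) ^ 2 := by
  have hg : ∀ u ∈ Set.Icc a b,
      HasDerivAt (fun u => f u - f a - (u - a) • f' a) (f' u - f' a) u := fun u hu => by
    convert ((hf u hu).sub_const (f a)).sub (((hasDerivAt_id u).sub_const a).smul_const (f' a))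
      using 1
    · rfl
    · simp
  refine image_norm_le_of_norm_deriv_right_le_deriv_boundary
    (fun u hu => (hg u hu).continuousAt.continuousWithinAt)
    (fun u hu => (hg u (Set.Ico_subset_Icc_self hu)).hasDerivWithinAt) (by simp)
    (B := fun u => K / 2 * (u - a) ^ 2) (B' := fun u => K * (u - a)) (fun u => ?_)
    (fun u hu => hf' u (Set.Ico_subset_Icc_self hu)) (Set.right_mem_Icc.2 hab)
  exact ((((hasDerivAt_id' u).sub_const a).pow 2).const_mul (K / 2)).congr_deriv (by ring)

lemma norm_sub_sub_apply_le_of_lipschitz_fderiv {G : V → W} {A : V → V →L[ℝ] W} {C : ℝ}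
    (hG : ∀ z, HasFDerivAt G (A z) z) (hA : ∀ z z', ‖A z - A z'‖ ≤ C * ‖z - z'‖) (x y : V) :
    ‖G y - G x - A x (y - x)‖ ≤ C / 2 * ‖y - x‖ ^ 2 := by
  set δ := y - x
  have hpath : ∀ u : ℝ, HasDerivAt (fun u : ℝ => G (x + u • δ)) (A (x + u • δ) δ) u := fun u =>
    (hG _).comp_hasDerivAt u (by simpa using ((hasDerivAt_id u).smul_const δ).const_add x)
  have hbound : ∀ u ∈ Set.Icc (0 : ℝ) 1,
      ‖A (x + u • δ) δ - A (x + (0 : ℝ) • δ) δ‖ ≤ C * ‖δ‖ ^ 2 * (u - 0) := fun u hu => by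
    rw [← sub_apply]
    calc ‖(A (x + u • δ) - A (x + (0 : ℝ) • δ)) δ‖
        ≤ ‖A (x + u • δ) - A (x + (0 : ℝ) • δ)‖ * ‖δ‖ := ContinuousLinearMap.le_opNorm _ _
      _ ≤ C * ‖u • δ‖ * ‖δ‖ := by gcongr; simpa using hA (x + u • δ) x
      _ = C * ‖δ‖ ^ 2 * (u - 0) := by rw [norm_smul, Real.norm_of_nonneg hu.1]; ring
  have := norm_sub_sub_smul_le_of_norm_deriv_sub_le (fun u _ => hpath u) hbound zero_le_one
  simp only [zero_smul, add_zero, one_smul, sub_zero, δ, add_sub_cancel] at this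
  linarith

lemma norm_fderiv_sub_le_of_time_deriv {G : ℝ → V → W} {A : ℝ → V → V →L[ℝ] W}
    {Gt : ℝ → V → W} {C : ℝ} (hC : 0 ≤ C) (hA : ∀ t y, HasFDerivAt (G t) (A t y) y)
    (hGt : ∀ t y, HasDerivAt (fun s => G s y) (Gt t y) t)
    (hGtlip : ∀ t y y', ‖Gt t y - Gt t y'‖ ≤ C * ‖y - y'‖) (t t' : ℝ) (y : V) :
    ‖A t' y - A t y‖ ≤ C * |t' - t| := by
  -- `G t' - G t` is `C |t' - t|`-Lipschitz: apply the mean value inequality to `s ↦ G s z - G s y`.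
  refine ((hA t' y).sub (hA t y)).le_of_lip' (by positivity) (Filter.Eventually.of_forall
    fun z => ?_)
  have := norm_sub_le_mul_abs_of_hasDerivAt (fun s => (hGt s z).sub (hGt s y))
    (fun s => hGtlip s z y) t t'
  calc ‖G t' z - G t z - (G t' y - G t y)‖ = ‖G t' z - G t' y - (G t z - G t y)‖ := by
        congr 1; abel
    _ ≤ C * ‖z - y‖ * |t' - t| := this
    _ = C * |t' - t| * ‖z - y‖ := by ring

lemma norm_sub_sub_apply_sub_smul_le {G : ℝ → V → W} {A : ℝ → V → V →L[ℝ] W}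
    {Gt Gtt : ℝ → V → W} {C1 C2 C3 : ℝ} (hC2 : 0 ≤ C2)
    (hA : ∀ t y, HasFDerivAt (G t) (A t y) y) (hGt : ∀ t y, HasDerivAt (fun s => G s y) (Gt t y) t)
    (hGtt : ∀ t y, HasDerivAt (fun s => Gt s y) (Gtt t y) t)
    (hC1b : ∀ t y y', ‖A t y - A t y'‖ ≤ C1 * ‖y - y'‖)
    (hC2b : ∀ t y y', ‖Gt t y - Gt t y'‖ ≤ C2 * ‖y - y'‖) (hC3b : ∀ t y, ‖Gtt t y‖ ≤ C3)
    {t t' : ℝ} (htt' : t ≤ t') (x x' : V) :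
    ‖G t' x' - G t x - A t x (x' - x) - (t' - t) • Gt t x‖
      ≤ C1 / 2 * ‖x' - x‖ ^ 2 + C2 * (t' - t) * ‖x' - x‖ + C3 / 2 * (t' - t) ^ 2 := by
  have hspace := norm_sub_sub_apply_le_of_lipschitz_fderiv (hA t') (hC1b t') x x'
  have hmixed : ‖(A t' x - A t x) (x' - x)‖ ≤ C2 * (t' - t) * ‖x' - x‖ := by
    refine ((A t' x - A t x).le_opNorm _).trans (mul_le_mul_of_nonneg_right ?_ (norm_nonneg _))
    simpa [abs_of_nonneg (sub_nonneg.2 htt')] using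
      norm_fderiv_sub_le_of_time_deriv hC2 hA hGt hC2b t t' x
  have htime := norm_sub_sub_smul_le_of_norm_deriv_sub_le (f := fun s => G s x) (K := C3)
    (fun u _ => hGt u x) (fun u hu => by
      simpa [abs_of_nonneg (sub_nonneg.2 hu.1)] using
        norm_sub_le_mul_abs_of_hasDerivAt (fun s => hGtt s x) (fun s => hC3b s x) t u) htt'
  calc ‖G t' x' - G t x - A t x (x' - x) - (t' - t) • Gt t x‖
      = ‖(G t' x' - G t' x - A t' x (x' - x)) + (A t' x - A t x) (x' - x)
          + (G t' x - G t x - (t' - t) • Gt t x)‖ := by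
        congr 1; rw [sub_apply]; abel
    _ ≤ ‖G t' x' - G t' x - A t' x (x' - x)‖ + ‖(A t' x - A t x) (x' - x)‖
          + ‖G t' x - G t x - (t' - t) • Gt t x‖ := norm_add₃_le
    _ ≤ _ := by gcongr

end Calculus

section Tracking

variable {V : Type*} [NormedAddCommGroup V] [InnerProductSpace ℝ V]

lemma mul_norm_sub_le_norm_sub_of_coercive_fderiv {G : V → V} {A : V → V →L[ℝ] V} {m : ℝ}
    (hG : ∀ z, HasFDerivAt G (A z) z) (hA : ∀ z v, m * ‖v‖ ^ 2 ≤ ⟪A z v, v⟫_ℝ) (a b : V) :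
    m * ‖a - b‖ ≤ ‖G a - G b‖ := by
  have hψ : ∀ u : ℝ,
      HasDerivAt (fun u : ℝ => ⟪a - b, G (b + u • (a - b))⟫_ℝ - u * (m * ‖a - b‖ ^ 2))
        (⟪a - b, A (b + u • (a - b)) (a - b)⟫_ℝ - 1 * (m * ‖a - b‖ ^ 2)) u := fun u =>
    (((innerSL ℝ (a - b)).hasFDerivAt).comp_hasDerivAt u ((hG _).comp_hasDerivAt u
      (by simpa using ((hasDerivAt_id u).smul_const (a - b)).const_add b))).sub
      ((hasDerivAt_id' u).mul_const _)
  have h01 := monotone_of_hasDerivAt_nonneg hψ (fun u => show (0 : ℝ) ≤ _ by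
    rw [one_mul, sub_nonneg, real_inner_comm]
    exact hA _ _) zero_le_one
  simp only [zero_smul, add_zero, zero_mul, sub_zero, one_smul, add_sub_cancel] at h01
  refine mul_norm_le_norm_of_mul_sq_le_inner ?_
  rw [inner_sub_left, real_inner_comm (a - b), real_inner_comm (a - b)]
  linarith

lemma isSymmetric_of_hasFDerivAt_gradient [CompleteSpace V] {f : V → ℝ} {g : V → V}
    {A : V →L[ℝ] V} {x : V} (hf : ∀ y, HasGradientAt f (g y) y) (hg : HasFDerivAt g A x) :
    (A : V →ₗ[ℝ] V).IsSymmetric := fun v w => by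
  have := second_derivative_symmetric (fun y => (hf y).hasFDerivAt)
    ((innerSL ℝ : V →L[ℝ] V →L[ℝ] ℝ).hasFDerivAt.comp x hg) v w
  exact this.trans (real_inner_comm v (A w))

lemma IsLocalMin.hasGradientAt_eq_zero [CompleteSpace V] {f : V → ℝ} {g x : V}
    (h : IsLocalMin f x) (hf : HasGradientAt f g x) : g = 0 :=
  (InnerProductSpace.toDual ℝ V).map_eq_zero_iff.1 (h.hasFDerivAt_eq_zero hf.hasFDerivAt)

lemma norm_le_of_hasFDerivAt_gradient [CompleteSpace V] {f : V → ℝ} {g : V → V}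
    {A : V →L[ℝ] V} {x : V} {m L : ℝ} (hm : 0 ≤ m) (hmL : m ≤ L)
    (hf : ∀ y, HasGradientAt f (g y) y) (hg : HasFDerivAt g A x)
    (hlow : ∀ v, m * ‖v‖ ^ 2 ≤ ⟪A v, v⟫_ℝ) (hup : ∀ v, ⟪A v, v⟫_ℝ ≤ L * ‖v‖ ^ 2) : ‖A‖ ≤ L :=
  A.norm_le_of_isSymmetric (isSymmetric_of_hasFDerivAt_gradient hf hg) (hm.trans hmL) fun v =>
    abs_le.2 ⟨by nlinarith [hlow v, sq_nonneg ‖v‖], hup v⟩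


variable [FiniteDimensional ℝ V]

lemma norm_drift_le {G : ℝ → V → V} {A : ℝ → V → V →L[ℝ] V} {Gt Gtt : ℝ → V → V}
    {m C0 C1 C2 C3 : ℝ} (hm : 0 < m) (hC1 : 0 ≤ C1) (hC2 : 0 ≤ C2)
    (hA : ∀ t y, HasFDerivAt (G t) (A t y) y) (hGt : ∀ t y, HasDerivAt (fun s => G s y) (Gt t y) t)
    (hGtt : ∀ t y, HasDerivAt (fun s => Gt s y) (Gtt t y) t)
    (hstrong : ∀ t y v, m * ‖v‖ ^ 2 ≤ ⟪A t y v, v⟫_ℝ) (hC0b : ∀ t y, ‖Gt t y‖ ≤ C0)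
    (hC1b : ∀ t y y', ‖A t y - A t y'‖ ≤ C1 * ‖y - y'‖)
    (hC2b : ∀ t y y', ‖Gt t y - Gt t y'‖ ≤ C2 * ‖y - y'‖) (hC3b : ∀ t y, ‖Gtt t y‖ ≤ C3)
    {t t' : ℝ} (htt' : t ≤ t') {x x' : V} (hx : G t x = 0) (hx' : G t' x' = 0) :
    ‖x' - x + (t' - t) • Ring.inverse (A t x) (Gt t x)‖
      ≤ (t' - t) ^ 2 * (C0 ^ 2 * C1 / (2 * m ^ 3) + C0 * C2 / m ^ 2 + C3 / (2 * m)) := by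
  have hmove : ‖x' - x‖ ≤ C0 / m * (t' - t) := by
    rw [div_mul_eq_mul_div, le_div_iff₀' hm]
    calc m * ‖x' - x‖ ≤ ‖G t' x' - G t' x‖ :=
          mul_norm_sub_le_norm_sub_of_coercive_fderiv (hA t') (hstrong t') x' x
      _ = ‖G t' x - G t x‖ := by rw [hx, hx', zero_sub, sub_zero, norm_neg]
      _ ≤ C0 * |t' - t| :=
          norm_sub_le_mul_abs_of_hasDerivAt (fun s => hGt s x) (fun s => hC0b s x) t t'
      _ = C0 * (t' - t) := by rw [abs_of_nonneg (sub_nonneg.2 htt')]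
  have htaylor := norm_sub_sub_apply_sub_smul_le hC2 hA hGt hGtt hC1b hC2b hC3b htt' x x'
  rw [hx, hx', sub_self, sub_sub, zero_sub, norm_neg] at htaylor
  have hid : x' - x + (t' - t) • Ring.inverse (A t x) (Gt t x)
      = Ring.inverse (A t x) (A t x (x' - x) + (t' - t) • Gt t x) := by
    rw [map_add, map_smul, (A t x).ringInverse_apply_apply (isUnit_of_coercive hm (hstrong t x))]
  rw [hid]
  refine (norm_ringInverse_apply_le hm (hstrong t x) _).trans ?_
  rw [div_le_iff₀ hm]
  calc ‖A t x (x' - x) + (t' - t) • Gt t x‖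
      ≤ C1 / 2 * ‖x' - x‖ ^ 2 + C2 * (t' - t) * ‖x' - x‖ + C3 / 2 * (t' - t) ^ 2 := htaylor
    _ ≤ C1 / 2 * (C0 / m * (t' - t)) ^ 2 + C2 * (t' - t) * (C0 / m * (t' - t))
          + C3 / 2 * (t' - t) ^ 2 := by
        have := sub_nonneg.2 htt'
        gcongr
    _ = (t' - t) ^ 2 * (C0 ^ 2 * C1 / (2 * m ^ 3) + C0 * C2 / m ^ 2 + C3 / (2 * m)) * m := by
        field_simp

lemma norm_prediction_sub_le {A : V → V →L[ℝ] V} {b : V → V} {H : V →L[ℝ] V}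
    {m C0 C1 C2 ε h d : ℝ} {x x' y : V} (hm : 0 < m) (hh : 0 ≤ h)
    (hA : ∀ z v, m * ‖v‖ ^ 2 ≤ ⟪A z v, v⟫_ℝ) (hC1b : ∀ z z', ‖A z - A z'‖ ≤ C1 * ‖z - z'‖)
    (hC0b : ∀ z, ‖b z‖ ≤ C0) (hC2b : ∀ z z', ‖b z - b z'‖ ≤ C2 * ‖z - z'‖)
    (hH : ‖ContinuousLinearMap.id ℝ V - (A y).comp H‖ ≤ ε)
    (hdrift : ‖x' - x + h • Ring.inverse (A x) (b x)‖ ≤ d) :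
    ‖y - h • H (b y) - x'‖
      ≤ (1 + h * (C0 * C1 / m ^ 2 + C2 / m)) * ‖y - x‖ + (h * C0 * ε / m + d) := by
  have happrox : ‖H (b y) - Ring.inverse (A y) (b y)‖ ≤ ε * C0 / m :=
    (norm_apply_sub_ringInverse_apply_le hm (hA y) H _).trans <| div_le_div_of_nonneg_right
      (mul_le_mul hH (hC0b y) (norm_nonneg _) ((norm_nonneg _).trans hH)) hm.le
  have hgrad : ‖Ring.inverse (A y) (b y) - Ring.inverse (A y) (b x)‖ ≤ C2 * ‖y - x‖ / m := by
    rw [← map_sub]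
    exact (norm_ringInverse_apply_le hm (hA y) _).trans (by gcongr; exact hC2b y x)
  have hhess : ‖Ring.inverse (A y) (b x) - Ring.inverse (A x) (b x)‖
      ≤ C1 * ‖y - x‖ * C0 / m ^ 2 :=
    (norm_ringInverse_apply_sub_le hm (hA y) (hA x) _).trans
      (by gcongr; exacts [(norm_nonneg _).trans (hC1b y x), hC1b y x, hC0b x])
  -- Pass through the exact Newton prediction `x - h • (A x)⁻¹ (b x)` made at the optimum `x`.
  have hid : y - h • H (b y) - x'
      = (y - x) - h • ((H (b y) - Ring.inverse (A y) (b y))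
          + (Ring.inverse (A y) (b y) - Ring.inverse (A y) (b x))
          + (Ring.inverse (A y) (b x) - Ring.inverse (A x) (b x)))
        - (x' - x + h • Ring.inverse (A x) (b x)) := by
    simp only [smul_add, smul_sub]
    abel
  calc ‖y - h • H (b y) - x'‖
      ≤ ‖y - x‖ + h * (‖H (b y) - Ring.inverse (A y) (b y)‖
          + ‖Ring.inverse (A y) (b y) - Ring.inverse (A y) (b x)‖
          + ‖Ring.inverse (A y) (b x) - Ring.inverse (A x) (b x)‖)
        + ‖x' - x + h • Ring.inverse (A x) (b x)‖ := by
        rw [hid]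
        refine (norm_sub_le _ _).trans (add_le_add_left ((norm_sub_le _ _).trans ?_) _)
        rw [norm_smul, Real.norm_of_nonneg hh]
        gcongr
        exact norm_add₃_le
    _ ≤ ‖y - x‖ + h * (ε * C0 / m + C2 * ‖y - x‖ / m + C1 * ‖y - x‖ * C0 / m ^ 2) + d := by
        gcongr
    _ = (1 + h * (C0 * C1 / m ^ 2 + C2 / m)) * ‖y - x‖ + (h * C0 * ε / m + d) := by ring

lemma norm_correction_sub_le {G : V → V} {A : V → V →L[ℝ] V} {H : V →L[ℝ] V}
    {m C1 L γ ε : ℝ} {x z : V} (hm : 0 < m) (hγ0 : 0 ≤ γ) (hγ1 : γ ≤ 1)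
    (hG : ∀ z, HasFDerivAt G (A z) z) (hA : ∀ z v, m * ‖v‖ ^ 2 ≤ ⟪A z v, v⟫_ℝ)
    (hC1b : ∀ z z', ‖A z - A z'‖ ≤ C1 * ‖z - z'‖) (hL : ∀ z, ‖A z‖ ≤ L) (hx : G x = 0)
    (hH : ‖ContinuousLinearMap.id ℝ V - (A z).comp H‖ ≤ ε) :
    ‖z - γ • H (G z) - x‖
      ≤ (1 - γ) * ‖z - x‖ + γ * (C1 / (2 * m) * ‖z - x‖ ^ 2 + ε * L / m * ‖z - x‖) := by
  have hGz : ‖G z‖ ≤ L * ‖z - x‖ := by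
    simpa [hx] using convex_univ.norm_image_sub_le_of_norm_hasFDerivWithin_le
      (fun w _ => (hG w).hasFDerivWithinAt) (fun w _ => hL w) (Set.mem_univ x) (Set.mem_univ z)
  have hnewton : ‖(z - x) - Ring.inverse (A z) (G z)‖ ≤ C1 / (2 * m) * ‖z - x‖ ^ 2 := by
    have hid : (z - x) - Ring.inverse (A z) (G z)
        = Ring.inverse (A z) (G x - G z - A z (x - z)) := by
      rw [hx, map_sub, map_sub, (A z).ringInverse_apply_apply (isUnit_of_coercive hm (hA z)),
        map_zero]
      abel
    rw [hid]
    refine (norm_ringInverse_apply_le hm (hA z) _).trans ?_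
    rw [div_le_iff₀ hm, norm_sub_rev z x]
    calc ‖G x - G z - A z (x - z)‖ ≤ C1 / 2 * ‖x - z‖ ^ 2 :=
          norm_sub_sub_apply_le_of_lipschitz_fderiv hG hC1b z x
      _ = C1 / (2 * m) * ‖x - z‖ ^ 2 * m := by field_simp
  have happrox : ‖Ring.inverse (A z) (G z) - H (G z)‖ ≤ ε * L / m * ‖z - x‖ := by
    rw [norm_sub_rev, div_mul_eq_mul_div, mul_assoc]
    exact (norm_apply_sub_ringInverse_apply_le hm (hA z) H _).trans <| div_le_div_of_nonneg_right
      (mul_le_mul hH hGz (norm_nonneg _) ((norm_nonneg _).trans hH)) hm.le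
  have hid : z - γ • H (G z) - x = (1 - γ) • (z - x) + γ • ((z - x) - Ring.inverse (A z) (G z))
      + γ • (Ring.inverse (A z) (G z) - H (G z)) := by
    simp only [smul_sub, sub_smul, one_smul]
    abel
  rw [hid]
  refine norm_add₃_le.trans ?_
  rw [norm_smul, norm_smul, norm_smul, Real.norm_of_nonneg (sub_nonneg.2 hγ1),
    Real.norm_of_nonneg hγ0, mul_add, ← add_assoc]
  gcongr

end Tracking

section Recurrence

lemma le_quadratic_of_le_damped_of_le_affine {p q e σ φ γ c d : ℝ} (hp0 : 0 ≤ p)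
    (hp : p ≤ σ * e + φ) (hγ0 : 0 ≤ γ) (hγ1 : γ ≤ 1) (hc : 0 ≤ c) (hd : 0 ≤ d)
    (hq : q ≤ (1 - γ) * p + γ * (c * p ^ 2 + d * p)) :
    q ≤ γ * c * σ ^ 2 * e ^ 2 + σ * (2 * γ * c * φ + γ * d + 1 - γ) * e
      + φ * (γ * c * φ + γ * d + 1 - γ) := by
  have := sub_nonneg.2 hγ1
  calc q ≤ (1 - γ) * p + γ * (c * p ^ 2 + d * p) := hq
    _ ≤ (1 - γ) * (σ * e + φ) + γ * (c * (σ * e + φ) ^ 2 + d * (σ * e + φ)) := by gcongr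
    _ = _ := by ring

lemma le_geometric_of_le_affine {e : ℕ → ℝ} {τ a : ℝ} (hτ0 : 0 ≤ τ) (hτ1 : τ ≠ 1)
    (hstep : ∀ k, e (k + 1) ≤ τ * e k + a) (k : ℕ) :
    e k ≤ τ ^ k * e 0 + a * (1 - τ ^ k) / (1 - τ) := by
  induction k with
  | zero => simp
  | succ k ih =>
    have h1τ : 1 - τ ≠ 0 := sub_ne_zero.2 hτ1.symm
    calc e (k + 1) ≤ τ * e k + a := hstep k
      _ ≤ τ * (τ ^ k * e 0 + a * (1 - τ ^ k) / (1 - τ)) + a := by gcongr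
      _ = τ ^ (k + 1) * e 0 + a * (1 - τ ^ (k + 1)) / (1 - τ) := by field_simp; ring

lemma le_affine_of_le_quadratic {e : ℕ → ℝ} {α₀ α₁ α₂ τ : ℝ} (he : ∀ k, 0 ≤ e k)
    (hα₂ : 0 < α₂) (hτ : 0 ≤ τ) (hstep : ∀ k, e (k + 1) ≤ α₂ * e k ^ 2 + α₁ * e k + α₀)
    (h0 : e 0 ≤ (τ - α₁) / α₂) (hstab : τ * ((τ - α₁) / α₂) + α₀ ≤ (τ - α₁) / α₂) (k : ℕ) :
    e (k + 1) ≤ τ * e k + α₀ := by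
  have haff : ∀ k, e k ≤ (τ - α₁) / α₂ → e (k + 1) ≤ τ * e k + α₀ := fun k hk => by
    have hrate : α₂ * e k + α₁ ≤ τ := by rwa [le_div_iff₀' hα₂, le_sub_iff_add_le] at hk
    calc e (k + 1) ≤ α₂ * e k ^ 2 + α₁ * e k + α₀ := hstep k
      _ = (α₂ * e k + α₁) * e k + α₀ := by ring
      _ ≤ τ * e k + α₀ := by gcongr; exact he k
  have hinv : ∀ k, e k ≤ (τ - α₁) / α₂ := fun k => by
    induction k with
    | zero => exact h0
    | succ k ih => exact (haff k ih).trans (le_trans (by gcongr) hstab)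
  exact haff k (hinv k)

lemma limsup_le_of_le_geometric {e : ℕ → ℝ} {c a τ : ℝ} (he : ∀ k, 0 ≤ e k) (hτ0 : 0 ≤ τ)
    (hτ1 : τ < 1) (hle : ∀ k, e k ≤ τ ^ k * c + a * (1 - τ ^ k) / (1 - τ)) :
    Filter.limsup e Filter.atTop ≤ a / (1 - τ) := by
  have hpow := tendsto_pow_atTop_nhds_zero_of_lt_one hτ0 hτ1
  have hlim : Filter.Tendsto (fun k => τ ^ k * c + a * (1 - τ ^ k) / (1 - τ)) Filter.atTop
      (nhds (a / (1 - τ))) := by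
    simpa using (hpow.mul_const c).add
      ((((tendsto_const_nhds (x := (1 : ℝ))).sub hpow).const_mul a).div_const (1 - τ))
  calc Filter.limsup e Filter.atTop
      ≤ Filter.limsup (fun k => τ ^ k * c + a * (1 - τ ^ k) / (1 - τ)) Filter.atTop :=
        Filter.limsup_le_limsup (Filter.Eventually.of_forall hle)
          (Filter.isBoundedUnder_of ⟨0, he⟩).isCoboundedUnder_le hlim.isBoundedUnder_le
    _ = a / (1 - τ) := hlim.limsup_eq

end Recurrence

theorem stmt_2_general {n : ℕ}
    (F : ℝ → (E n) → ℝ)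
    (Fgrad : ℝ → (E n) → (E n))
    (Hess : ℝ → (E n) → (E n) →L[ℝ] (E n))
    (Gt Gtt : ℝ → (E n) → (E n))
    (m L' C0 C1 C2 C3 : ℝ)
    (hm : 0 < m) (hmL : m ≤ L')
    (hC1 : 0 ≤ C1) (hC2 : 0 ≤ C2)
    (hgrad : ∀ t y, HasGradientAt (F t) (Fgrad t y) y)
    (hhess : ∀ t y, HasFDerivAt (Fgrad t) (Hess t y) y)
    (ht : ∀ t y, HasDerivAt (fun s => Fgrad s y) (Gt t y) t)
    (htt : ∀ t y, HasDerivAt (fun s => Gt s y) (Gtt t y) t)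
    (hstrong : ∀ t y (v : E n), m * ‖v‖ ^ 2 ≤ ⟪Hess t y v, v⟫_ℝ)
    (hsmooth : ∀ t y (v : E n), ⟪Hess t y v, v⟫_ℝ ≤ L' * ‖v‖ ^ 2)
    (hC0b : ∀ t y, ‖Gt t y‖ ≤ C0)
    (hC1b : ∀ t y y', ‖Hess t y - Hess t y'‖ ≤ C1 * ‖y - y'‖)
    (hC2b : ∀ t y y', ‖Gt t y - Gt t y'‖ ≤ C2 * ‖y - y'‖)
    (hC3b : ∀ t y, ‖Gtt t y‖ ≤ C3)
    (ystar : ℝ → E n)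
    (hmin : ∀ t, IsMinOn (F t) Set.univ (ystar t))
    (h γ ε ε' Δ σ : ℝ) (hh : 0 < h)
    (hγ : 0 < γ) (hγ1 : γ ≤ 1)
    (hΔ : Δ = C0 ^ 2 * C1 / (2 * m ^ 3) + C0 * C2 / m ^ 2 + C3 / (2 * m))
    (hσ : σ = 1 + h * (C0 * C1 / m ^ 2 + C2 / m))
    (tk : ℕ → ℝ) (htk : ∀ k : ℕ, tk k = k * h)
    (y ypred : ℕ → E n)
    (H Hhat : ℕ → (E n) →L[ℝ] (E n))
    (hHerr : ∀ k, ‖ContinuousLinearMap.id ℝ (E n) - (Hess (tk k) (y k)).comp (H k)‖ ≤ ε)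
    (hHhaterr : ∀ k,
      ‖ContinuousLinearMap.id ℝ (E n) - (Hess (tk (k + 1)) (ypred k)).comp (Hhat k)‖ ≤ ε')
    (hpred : ∀ k, ypred k = y k - h • H k (Gt (tk k) (y k)))
    (hcorr : ∀ k, y (k + 1) = ypred k - γ • Hhat k (Fgrad (tk (k + 1)) (ypred k)))
    (φ α₀ α₁ α₂ τ : ℝ)
    (hφ : φ = h * C0 * ε / m + h ^ 2 * Δ)
    (hα₂ : α₂ = γ * C1 * σ ^ 2 / (2 * m))
    (hα₁ : α₁ = σ * (γ * C1 * φ / m + γ * L' * ε' / m + 1 - γ))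
    (hα₀ : α₀ = φ * (γ * C1 * φ / (2 * m) + γ * L' * ε' / m + 1 - γ))
    (hα₂pos : 0 < α₂)
    (hτ0 : 0 < τ) (hτ1 : τ < 1)
    (hinit : ‖y 0 - ystar (tk 0)‖ ≤ (τ - α₁) / α₂)
    (hstab : τ * ((τ - α₁) / α₂) + α₀ ≤ (τ - α₁) / α₂) :
    (∀ k : ℕ, ‖y k - ystar (tk k)‖
        ≤ τ ^ k * ‖y 0 - ystar (tk 0)‖ + α₀ * (1 - τ ^ k) / (1 - τ))
    ∧ Filter.limsup (fun k => ‖y k - ystar (tk k)‖) Filter.atTop ≤ α₀ / (1 - τ) := by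
  have hgrad0 : ∀ t, Fgrad t (ystar t) = 0 := fun t =>
    ((hmin t).isLocalMin Filter.univ_mem).hasGradientAt_eq_zero (hgrad t _)
  have hHessL : ∀ t z, ‖Hess t z‖ ≤ L' := fun t z =>
    norm_le_of_hasFDerivAt_gradient hm.le hmL (hgrad t) (hhess t z) (hstrong t z) (hsmooth t z)
  have hstep : ∀ k, ‖y (k + 1) - ystar (tk (k + 1))‖
      ≤ α₂ * ‖y k - ystar (tk k)‖ ^ 2 + α₁ * ‖y k - ystar (tk k)‖ + α₀ := by
    intro k
    have hdt : tk (k + 1) - tk k = h := by rw [htk, htk]; push_cast; ring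
    have hdrift := norm_drift_le hm hC1 hC2 hhess ht htt hstrong hC0b hC1b hC2b hC3b
      (by linarith : tk k ≤ tk (k + 1)) (hgrad0 _) (hgrad0 _)
    rw [hdt, ← hΔ] at hdrift
    have hp := norm_prediction_sub_le hm hh.le (hstrong _) (hC1b _) (hC0b _) (hC2b _) (hHerr k)
      hdrift
    rw [← hpred k, ← hσ, ← hφ] at hp
    have hc := norm_correction_sub_le hm hγ.le hγ1 (hhess _) (hstrong _) (hC1b _) (hHessL _)
      (hgrad0 _) (hHhaterr k)
    rw [← hcorr k] at hc
    have hε' : 0 ≤ ε' := (norm_nonneg _).trans (hHhaterr k)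
    calc _ ≤ _ := le_quadratic_of_le_damped_of_le_affine (norm_nonneg _) hp hγ.le hγ1
          (by positivity) (div_nonneg (mul_nonneg hε' (hm.le.trans hmL)) hm.le) hc
      _ = _ := by rw [hα₂, hα₁, hα₀]; ring
  have hbound := le_geometric_of_le_affine (e := fun k => ‖y k - ystar (tk k)‖) hτ0.le hτ1.ne
    (le_affine_of_le_quadratic (e := fun k => ‖y k - ystar (tk k)‖) (fun k => norm_nonneg _)
      hα₂pos hτ0.le hstep hinit hstab)
  exact ⟨hbound, limsup_le_of_le_geometric (e := fun k => ‖y k - ystar (tk k)‖)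
    (fun k => norm_nonneg _) hτ0.le hτ1 hbound⟩

/-- Theorem 2, decentralized form: DPC-N iterates, with
approximate Hessian inverses H_k (prediction, error ε) and Ĥ_k (correction,
error ε') and damped Newton step-size γ ∈ (0,1], converge Q-linearly with
rate τ inside the attraction region, up to asymptotic error α₀/(1−τ). -/
theorem stmt_2 {n : ℕ} (hn : 1 ≤ n)
    (F : ℝ → (E n) → ℝ)
    (Fgrad : ℝ → (E n) → (E n))
    (Hess : ℝ → (E n) → (E n) →L[ℝ] (E n))
    (Gt Gtt : ℝ → (E n) → (E n))
    (m L' C0 C1 C2 C3 : ℝ)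
    (hm : 0 < m) (hmL : m ≤ L')
    (hC0 : 0 ≤ C0) (hC1 : 0 ≤ C1) (hC2 : 0 ≤ C2) (hC3 : 0 ≤ C3)
    (hF2 : ∀ t, ContDiff ℝ 2 (F t))
    (hG1 : ContDiff ℝ 1 (Function.uncurry Fgrad))
    (hgrad : ∀ t y, HasGradientAt (F t) (Fgrad t y) y)
    (hhess : ∀ t y, HasFDerivAt (Fgrad t) (Hess t y) y)
    (ht : ∀ t y, HasDerivAt (fun s => Fgrad s y) (Gt t y) t)
    (htt : ∀ t y, HasDerivAt (fun s => Gt s y) (Gtt t y) t)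
    (hstrong : ∀ t y (v : E n), m * ‖v‖ ^ 2 ≤ ⟪Hess t y v, v⟫_ℝ)
    (hsmooth : ∀ t y (v : E n), ⟪Hess t y v, v⟫_ℝ ≤ L' * ‖v‖ ^ 2)
    (hC0b : ∀ t y, ‖Gt t y‖ ≤ C0)
    (hC1b : ∀ t y y', ‖Hess t y - Hess t y'‖ ≤ C1 * ‖y - y'‖)
    (hC2b : ∀ t y y', ‖Gt t y - Gt t y'‖ ≤ C2 * ‖y - y'‖)
    (hC3b : ∀ t y, ‖Gtt t y‖ ≤ C3)
    (ystar : ℝ → E n)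
    (hmin : ∀ t, IsMinOn (F t) Set.univ (ystar t))
    (h γ ε ε' Δ σ : ℝ) (hh : 0 < h) (hε : 0 ≤ ε) (hε' : 0 ≤ ε')
    (hγ : 0 < γ) (hγ1 : γ ≤ 1)
    (hΔ : Δ = C0 ^ 2 * C1 / (2 * m ^ 3) + C0 * C2 / m ^ 2 + C3 / (2 * m))
    (hσ : σ = 1 + h * (C0 * C1 / m ^ 2 + C2 / m))
    (tk : ℕ → ℝ) (htk : ∀ k : ℕ, tk k = k * h)
    (y ypred : ℕ → E n)
    (H Hhat : ℕ → (E n) →L[ℝ] (E n))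
    (hHsa : ∀ k, IsSelfAdjoint (H k))
    (hHpsd : ∀ k (v : E n), 0 ≤ ⟪H k v, v⟫_ℝ)
    (hHhatsa : ∀ k, IsSelfAdjoint (Hhat k))
    (hHhatpsd : ∀ k (v : E n), 0 ≤ ⟪Hhat k v, v⟫_ℝ)
    (hHerr : ∀ k, ‖ContinuousLinearMap.id ℝ (E n) - (Hess (tk k) (y k)).comp (H k)‖ ≤ ε)
    (hHhaterr : ∀ k,
      ‖ContinuousLinearMap.id ℝ (E n) - (Hess (tk (k + 1)) (ypred k)).comp (Hhat k)‖ ≤ ε')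
    (hpred : ∀ k, ypred k = y k - h • H k (Gt (tk k) (y k)))
    (hcorr : ∀ k, y (k + 1) = ypred k - γ • Hhat k (Fgrad (tk (k + 1)) (ypred k)))
    (φ α₀ α₁ α₂ τ : ℝ)
    (hφ : φ = h * C0 * ε / m + h ^ 2 * Δ)
    (hα₂ : α₂ = γ * C1 * σ ^ 2 / (2 * m))
    (hα₁ : α₁ = σ * (γ * C1 * φ / m + γ * L' * ε' / m + 1 - γ))
    (hα₀ : α₀ = φ * (γ * C1 * φ / (2 * m) + γ * L' * ε' / m + 1 - γ))
    (hα₂pos : 0 < α₂)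
    (hτ0 : 0 < τ) (hτ1 : τ < 1)
    (hτα₁ : α₁ < τ)
    (hinit : ‖y 0 - ystar (tk 0)‖ ≤ (τ - α₁) / α₂)
    (hstab : τ * ((τ - α₁) / α₂) + α₀ ≤ (τ - α₁) / α₂) :
    (∀ k : ℕ, ‖y k - ystar (tk k)‖
        ≤ τ ^ k * ‖y 0 - ystar (tk 0)‖ + α₀ * (1 - τ ^ k) / (1 - τ))
    ∧ Filter.limsup (fun k => ‖y k - ystar (tk k)‖) Filter.atTop ≤ α₀ / (1 - τ) :=
  stmt_2_general F Fgrad Hess Gt Gtt m L' C0 C1 C2 C3 hm hmL hC1 hC2 hgrad hhess ht htt hstrong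
    hsmooth hC0b hC1b hC2b hC3b ystar hmin h γ ε ε' Δ σ hh hγ hγ1 hΔ hσ tk htk y ypred H Hhat hHerr
    hHhaterr hpred hcorr φ α₀ α₁ α₂ τ hφ hα₂ hα₁ hα₀ hα₂pos hτ0 hτ1 hinit hstab
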